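/- Let f(x,y) ∈ K[[x_1,...,x_n, y]] be a nonzero formal power series in n+1 variables over a field K of characteristic zero, and let ȳ(x) ∈ K[[x_1,...,x_n]] be a power series without constant term with f(x, ȳ(x)) = 0. Then there exists g(x,y) ∈ K[[x,y]] with g(x, ȳ(x)) = 0 and (∂g/∂y)(x, ȳ(x)) ≠ 0. -/

import Mathlib

/-- Substitution of power series without constant term into a formal power series,
defined coefficientwise. -/
noncomputable def psubst {K : Type} [Field K] {σ τ : Type} [Fintype σ] [DecidableEq σ]
    (g : σ → MvPowerSeries τ K) (f : MvPowerSeries σ K) : MvPowerSeries τ K :=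
  fun e => ∑ d ∈ Finset.Iic (Finsupp.equivFunOnFinite.symm fun _ => e.sum fun _ m => m),
    MvPowerSeries.coeff d f * MvPowerSeries.coeff e (∏ i, g i ^ d i)

/-- The partial derivative of a multivariate formal power series. -/
noncomputable def ppderiv {K : Type} [Field K] {σ : Type} [DecidableEq σ] (i : σ)
    (f : MvPowerSeries σ K) : MvPowerSeries σ K :=
  fun e => ((e i + 1 : ℕ) : K) * MvPowerSeries.coeff (e + Finsupp.single i 1) f

/-!
If all `∂ᵏg/∂yᵏ` vanish at `y = ȳ(x)`, then `g = 0`: by well-founded induction on the exponent `e`,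
the coefficients of every `∂ᵏg/∂yᵏ` at `xᵃ yʲ` with `a < e` vanish, so (as `ȳ(0) = 0`) the
coefficient of `xᵉ` in `(∂ᵏg/∂yᵏ)(x, ȳ)` is `k!` times the coefficient of `xᵉ yᵏ` in `g`.
Since `f ≠ 0` and `f(x, ȳ) = 0`, some `∂ᵏf/∂yᵏ` therefore vanishes at `ȳ` while `∂ᵏ⁺¹f/∂yᵏ⁺¹`
does not.
-/

open MvPowerSeries

namespace Finsupp

variable {n : ℕ} {M : Type*}

section Zero

variable [Zero M]

noncomputable def init (t : Fin (n + 1) →₀ M) : Fin n →₀ M :=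
  equivFunOnFinite.symm (Fin.init t)

noncomputable def snoc (s : Fin n →₀ M) (y : M) : Fin (n + 1) →₀ M :=
  equivFunOnFinite.symm (Fin.snoc s y)

@[simp]
theorem init_apply (t : Fin (n + 1) →₀ M) (i : Fin n) : init t i = t i.castSucc :=
  rfl

@[simp]
theorem snoc_castSucc (s : Fin n →₀ M) (y : M) (i : Fin n) : snoc s y i.castSucc = s i := by
  simp [snoc]

@[simp]
theorem snoc_last (s : Fin n →₀ M) (y : M) : snoc s y (Fin.last n) = y := by
  simp [snoc]

@[simp]
theorem init_snoc (s : Fin n →₀ M) (y : M) : init (snoc s y) = s := by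
  ext i; simp

@[simp]
theorem snoc_init (t : Fin (n + 1) →₀ M) : snoc (init t) (t (Fin.last n)) = t := by
  ext i; cases i using Fin.lastCases <;> simp

end Zero

theorem snoc_add_single_last [AddZeroClass M] (s : Fin n →₀ M) (y z : M) :
    snoc s y + single (Fin.last n) z = snoc s (y + z) := by
  ext i
  cases i using Fin.lastCases with
  | last => simp
  | cast i => simp

end Finsupp

theorem MvPowerSeries.prod_X_pow_eq_monomial {R σ : Type*} [CommSemiring R] [Fintype σ]
    (m : σ →₀ ℕ) : ∏ i, (X i : MvPowerSeries σ R) ^ m i = monomial m 1 :=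
  ((monomial_one_eq m).trans (Finsupp.prod_fintype _ _ fun _ => pow_zero _)).symm

theorem coeff_ppderiv {K : Type} [Field K] {σ : Type} [DecidableEq σ] (y : σ)
    (g : MvPowerSeries σ K) (u : σ →₀ ℕ) :
    coeff u (ppderiv y g) = ((u y + 1 : ℕ) : K) * coeff (u + Finsupp.single y 1) g :=
  rfl

theorem coeff_iterate_ppderiv {K : Type} [Field K] {σ : Type} [DecidableEq σ] (y : σ) (k : ℕ)
    (g : MvPowerSeries σ K) (u : σ →₀ ℕ) :
    coeff u ((ppderiv y)^[k] g)
      = ((u y + k).descFactorial k : K) * coeff (u + Finsupp.single y k) g := by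
  induction k generalizing u g with
  | zero => simp
  | succ k ih =>
    rw [Function.iterate_succ_apply, ih, coeff_ppderiv,
      Finsupp.add_apply, Finsupp.single_eq_same, add_assoc u, ← Finsupp.single_add,
      ← add_assoc, Nat.succ_descFactorial_succ]
    push_cast
    ring

section Substitution

variable {K : Type} [Field K] {n : ℕ} (ybar : MvPowerSeries (Fin n) K)

theorem prod_snoc_X_pow (d : Fin (n + 1) →₀ ℕ) :
    ∏ i, (Fin.snoc (fun i => X i) ybar : Fin (n + 1) → MvPowerSeries (Fin n) K) i ^ d i
      = monomial (Finsupp.init d) 1 * ybar ^ d (Fin.last n) := by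
  rw [Fin.prod_univ_castSucc, Fin.snoc_last, ← prod_X_pow_eq_monomial]
  simp

/-- As `ȳ(0) = 0`, the coefficient of `g` at `xᵃ yʲ` contributes to that of `xᵉ` in `g(x, ȳ)` only
if `a < e`, or `a = e` and `j = 0`. -/
theorem coeff_psubst_snoc_X (hy0 : constantCoeff ybar = 0) (g : MvPowerSeries (Fin (n + 1)) K)
    (e : Fin n →₀ ℕ) (hlow : ∀ d, Finsupp.init d < e → coeff d g = 0) :
    coeff e (psubst (Fin.snoc (fun i => X i) ybar) g) = coeff (Finsupp.snoc e 0) g := by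
  have hmem : Finsupp.snoc e 0 ∈ Finset.Iic (Finsupp.equivFunOnFinite.symm
      fun _ => e.sum fun _ m => m) := by
    refine Finset.mem_Iic.2 fun i => ?_
    cases i using Fin.lastCases with
    | last => simp
    | cast i => simpa [Finsupp.degree_apply, Finsupp.sum] using Finsupp.le_degree i e
  refine (Finset.sum_eq_single_of_mem _ hmem fun d _ hne => ?_).trans ?_
  · rw [prod_snoc_X_pow, coeff_monomial_mul]
    split_ifs with hle
    · rcases hle.lt_or_eq with hlt | rfl
      · rw [hlow d hlt, zero_mul]
      · have hk : d (Fin.last n) ≠ 0 := fun h0 => hne (by rw [← h0, Finsupp.snoc_init])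
        rw [tsub_self, coeff_zero_eq_constantCoeff_apply, map_pow, hy0, zero_pow hk, one_mul,
          mul_zero]
    · rw [mul_zero]
  · rw [prod_snoc_X_pow, Finsupp.init_snoc, Finsupp.snoc_last, pow_zero, mul_one,
      coeff_monomial_same, mul_one]

theorem eq_zero_of_forall_psubst_iterate_ppderiv_eq_zero [CharZero K]
    (hy0 : constantCoeff ybar = 0) (g : MvPowerSeries (Fin (n + 1)) K)
    (hg : ∀ m, psubst (Fin.snoc (fun i => X i) ybar) ((ppderiv (Fin.last n))^[m] g) = 0) :
    g = 0 := by
  suffices h : ∀ e k (g : MvPowerSeries (Fin (n + 1)) K),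
      (∀ m, psubst (Fin.snoc (fun i => X i) ybar) ((ppderiv (Fin.last n))^[m] g) = 0) →
      coeff (Finsupp.snoc e k) g = 0 by
    ext d
    simpa using h (Finsupp.init d) (d (Fin.last n)) g hg
  intro e
  induction e using WellFoundedLT.induction with
  | _ e ih =>
    intro k g hg
    have hgk : ∀ m, psubst (Fin.snoc (fun i => X i) ybar)
        ((ppderiv (Fin.last n))^[m] ((ppderiv (Fin.last n))^[k] g)) = 0 := fun m => by
      rw [← Function.iterate_add_apply]; exact hg _
    have hlow : ∀ d, Finsupp.init d < e → coeff d ((ppderiv (Fin.last n))^[k] g) = 0 :=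
      fun d hd => by simpa using ih _ hd (d (Fin.last n)) _ hgk
    have h := coeff_psubst_snoc_X ybar hy0 _ e hlow
    rw [hg k, map_zero, coeff_iterate_ppderiv, Finsupp.snoc_add_single_last, Finsupp.snoc_last,
      zero_add, Nat.descFactorial_self] at h
    exact (mul_eq_zero.1 h.symm).resolve_left (Nat.cast_ne_zero.2 k.factorial_ne_zero)

end Substitution

/-- Corollary 2 (key step): if a nonzero `f(x,y)` in `n+1` variables is annihilated by a
formal power series `ȳ(x)` without constant term, then some `g` annihilated by `ȳ` has
`∂g/∂y` not annihilated by `ȳ`. The last variable of `Fin (n+1)` plays the role of `y`. -/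
theorem exists_annihilator_with_nonvanishing_y_derivative {K : Type} [Field K] [CharZero K]
    {n : ℕ} (f : MvPowerSeries (Fin (n + 1)) K) (hf : f ≠ 0)
    (ybar : MvPowerSeries (Fin n) K)
    (hy0 : MvPowerSeries.constantCoeff ybar = 0)
    (hsol : psubst (Fin.snoc (fun i => MvPowerSeries.X i) ybar) f = 0) :
    ∃ g : MvPowerSeries (Fin (n + 1)) K,
      psubst (Fin.snoc (fun i => MvPowerSeries.X i) ybar) g = 0 ∧
      psubst (Fin.snoc (fun i => MvPowerSeries.X i) ybar) (ppderiv (Fin.last n) g) ≠ 0 := by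
  by_contra! H
  refine hf (eq_zero_of_forall_psubst_iterate_ppderiv_eq_zero ybar hy0 f fun m => ?_)
  induction m with
  | zero => exact hsol
  | succ m ih => rw [Function.iterate_succ_apply']; exact H _ ih
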